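/- Let u : 𝔸 → S¹ be continuous and suppose u(x) → λ ∈ S¹ along the cocompact filter of 𝔸 (i.e., for every ε > 0 there is a compact set K ⊆ 𝔸 with |u(x) − λ| < ε for all x ∉ K). Then: (i) for every x_f ∈ 𝔸_f the function u_{x_f}(t) = u(t, x_f) on ℝ has limit λ at both +∞ and −∞, so it has a well-defined integer winding number w(x_f) = lim_{x→+∞} (ũ_{x_f}(x) − ũ_{x_f}(−x)) for any lift ũ_{x_f}; (ii) the resulting function w : 𝔸_f → ℤ is continuous (with ℤ discrete) and vanishes outside a compact subset of 𝔸_f. -/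

import Mathlib

open Filter IsDedekindDomain

noncomputable section

/-- The finite adele ring `𝔸_f` of `ℚ`: the restricted product of the fields `ℚ_p` with
respect to the subrings `ℤ_p`, with the restricted product topology. -/
abbrev FiniteAdeles : Type := FiniteAdeleRing ℤ ℚ

/-- The adele ring `𝔸 = ℝ × 𝔸_f` of `ℚ`. -/
abbrev AdeleRingQ : Type := ℝ × FiniteAdeles

/-- The diagonal embedding `ι : ℚ → 𝔸`, `q ↦ (q, (q)_p)`. -/
def diag (q : ℚ) : AdeleRingQ := ((q : ℝ), algebraMap ℚ FiniteAdeles q)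

/-- A function on the adele ring is `ℚ`-periodic if it is invariant under translation by
every diagonally embedded rational. -/
def QPeriodic {β : Type*} (g : AdeleRingQ → β) : Prop :=
  ∀ (x : AdeleRingQ) (α : ℚ), g (x + diag α) = g x

/-- A continuous function `f : ℝ → ℂ` taking values in the unit circle `S¹` is *pre-periodic*
if for every `ε > 0` there is a positive integer `N` such that
`|f (x + k * N) - f x| < ε` for all integers `k` and all real `x`. -/
def PrePeriodic (f : ℝ → ℂ) : Prop :=
  Continuous f ∧ (∀ x : ℝ, ‖f x‖ = 1) ∧
    ∀ ε : ℝ, 0 < ε → ∃ N : ℕ, 0 < N ∧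
      ∀ (k : ℤ) (x : ℝ), ‖f (x + (k : ℝ) * (N : ℝ)) - f x‖ < ε

/-- `F : ℝ → ℝ` is a lift of `f : ℝ → S¹ ⊆ ℂ` if `F` is continuous and
`f x = e^{2 π i F x}` for all `x`. -/
def IsLift (f : ℝ → ℂ) (F : ℝ → ℝ) : Prop :=
  Continuous F ∧ ∀ x : ℝ, f x = Complex.exp (2 * Real.pi * Complex.I * (F x : ℂ))

/-!
A continuous map `ℝ → S¹` lifts through `t ↦ e^{2πit}`, and two lifts on a connected set differ by
a constant integer. If `f` stays within `1` of `g` and `G` lifts `g`, then `G + arg (f / g) / 2π`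
lifts `f`. With `g ≡ λ` near `±∞`, this shows that a lift of a slice `u (·, x_f)` converges at both
ends, to limits congruent mod `ℤ`: their difference is the winding number. With `g` another slice,
it shows that slices uniformly within `1` of each other have the same winding number. Slices over
nearby `x_f` are uniformly close (by continuity over a compact set of `t`, and because both are
near `λ` beyond it), so `w` is locally constant; outside the projection of a compact set, a slice
is uniformly within `1` of the constant `λ`, so `w` vanishes there.
-/

open Topology Complex

theorem exp_two_pi_I_mul_eq_iff {a b : ℝ} :
    exp (2 * Real.pi * I * a) = exp (2 * Real.pi * I * b) ↔ ∃ n : ℤ, a = b + n := by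
  rw [exp_eq_exp_iff_exists_int]
  refine exists_congr fun n => ⟨fun h => ?_, fun h => by rw [h]; push_cast; ring⟩
  have : (a : ℂ) = b + n := mul_left_cancel₀ two_pi_I_ne_zero (by linear_combination h)
  exact_mod_cast this

theorem norm_exp_two_pi_I_mul (a : ℝ) : ‖exp (2 * Real.pi * I * a)‖ = 1 := by
  rw [← norm_exp_ofReal_mul_I (2 * Real.pi * a)]
  push_cast
  ring_nf

theorem exp_two_pi_I_mul_add (a b : ℝ) :
    exp (2 * Real.pi * I * (a + b : ℝ)) =
      exp (2 * Real.pi * I * a) * exp (2 * Real.pi * I * b) := by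
  rw [← exp_add]
  push_cast
  ring_nf

def argDivTwoPi (z : ℂ) : ℝ := arg z / (2 * Real.pi)

theorem exp_two_pi_I_mul_argDivTwoPi {z : ℂ} (hz : ‖z‖ = 1) :
    exp (2 * Real.pi * I * argDivTwoPi z) = z := by
  conv_rhs => rw [← norm_mul_exp_arg_mul_I z, hz]
  simp only [argDivTwoPi, ofReal_div, ofReal_mul, ofReal_ofNat, ofReal_one, one_mul]
  congr 1
  field_simp

theorem argDivTwoPi_one : argDivTwoPi 1 = 0 := by
  simp [argDivTwoPi]

theorem continuousAt_argDivTwoPi {z : ℂ} (hz : z ∈ slitPlane) : ContinuousAt argDivTwoPi z :=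
  (continuousAt_arg hz).div_const _

theorem tendsto_argDivTwoPi_div {α : Type*} {l : Filter α} {f g : α → ℂ} {c : ℂ} (hc : c ≠ 0)
    (hf : Tendsto f l (𝓝 c)) (hg : Tendsto g l (𝓝 c)) :
    Tendsto (fun x => argDivTwoPi (f x / g x)) l (𝓝 0) := by
  have hfg := hf.div hg hc
  rw [div_self hc] at hfg
  have := (continuousAt_argDivTwoPi one_mem_slitPlane).tendsto.comp hfg
  rwa [argDivTwoPi_one] at this

theorem div_mem_slitPlane_of_norm_sub_lt_one {z w : ℂ} (hw : ‖w‖ = 1) (h : ‖z - w‖ < 1) :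
    z / w ∈ slitPlane := by
  have hw0 : w ≠ 0 := norm_ne_zero_iff.1 (by rw [hw]; exact one_ne_zero)
  have := mem_slitPlane_of_norm_lt_one (z := (z - w) / w) (by rwa [norm_div, hw, div_one])
  rwa [sub_div, div_self hw0, add_sub_cancel] at this

section IsLiftOn

variable {X : Type*} [TopologicalSpace X] {f g : X → ℂ} {F G : X → ℝ} {s : Set X}

def IsLiftOn (f : X → ℂ) (F : X → ℝ) (s : Set X) : Prop :=
  ContinuousOn F s ∧ ∀ x ∈ s, f x = exp (2 * Real.pi * I * F x)

theorem IsLift.isLiftOn {f : ℝ → ℂ} {F : ℝ → ℝ} (hF : IsLift f F) (s : Set ℝ) :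
    IsLiftOn f F s :=
  ⟨hF.1.continuousOn, fun x _ => hF.2 x⟩

theorem isLiftOn_const {c : ℂ} (hc : ‖c‖ = 1) (s : Set X) :
    IsLiftOn (fun _ => c) (fun _ => argDivTwoPi c) s :=
  ⟨continuousOn_const, fun _ _ => (exp_two_pi_I_mul_argDivTwoPi hc).symm⟩

theorem IsLiftOn.continuousOn (hF : IsLiftOn f F s) : ContinuousOn f s :=
  (continuous_exp.comp_continuousOn
    (continuousOn_const.mul (continuous_ofReal.comp_continuousOn hF.1))).congr hF.2

theorem IsLiftOn.norm_eq_one (hF : IsLiftOn f F s) {x : X} (hx : x ∈ s) : ‖f x‖ = 1 := by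
  rw [hF.2 x hx, norm_exp_two_pi_I_mul]

theorem IsPreconnected.exists_eq_add_intCast_of_isLiftOn (hs : IsPreconnected s)
    (hF : IsLiftOn f F s) (hG : IsLiftOn f G s) :
    ∃ n : ℤ, ∀ x ∈ s, F x = G x + n := by
  rcases s.eq_empty_or_nonempty with rfl | ⟨x₀, hx₀⟩
  · exact ⟨0, by simp⟩
  have hint : Set.MapsTo (F - G) s (Set.range ((↑) : ℤ → ℝ)) := fun x hx => by
    obtain ⟨n, hn⟩ := exp_two_pi_I_mul_eq_iff.1 ((hF.2 x hx).symm.trans (hG.2 x hx))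
    exact ⟨n, by simp [hn]⟩
  obtain ⟨n, hn⟩ := hint hx₀
  refine ⟨n, fun x hx => ?_⟩
  have := hs.constant_of_mapsTo Int.isClosedEmbedding_coe_real.isInducing.isDiscrete_range
    (hF.1.sub hG.1) hint hx hx₀
  simp only [Pi.sub_apply] at this hn
  linarith

theorem IsLiftOn.add_argDivTwoPi_div (hG : IsLiftOn g G s) (hf : ContinuousOn f s)
    (hf1 : ∀ x ∈ s, ‖f x‖ = 1) (hfg : ∀ x ∈ s, ‖f x - g x‖ < 1) :
    IsLiftOn f (fun x => G x + argDivTwoPi (f x / g x)) s := by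
  have hg0 : ∀ x ∈ s, g x ≠ 0 := fun x hx => norm_ne_zero_iff.1 (by simp [hG.norm_eq_one hx])
  refine ⟨hG.1.add fun x hx => ?_, fun x hx => ?_⟩
  · have hslit := div_mem_slitPlane_of_norm_sub_lt_one (hG.norm_eq_one hx) (hfg x hx)
    exact ContinuousAt.comp_continuousWithinAt (g := argDivTwoPi) (continuousAt_argDivTwoPi hslit)
      (hf.div hG.continuousOn hg0 x hx)
  · rw [exp_two_pi_I_mul_add, ← hG.2 x hx,
      exp_two_pi_I_mul_argDivTwoPi (by rw [norm_div, hf1 x hx, hG.norm_eq_one hx, div_one]),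
      mul_div_cancel₀ _ (hg0 x hx)]

end IsLiftOn

section Winding

variable {f g : ℝ → ℂ} {F G : ℝ → ℝ} {c : ℂ}

theorem norm_eq_one_of_tendsto {α : Type*} {l : Filter α} [l.NeBot] {φ : α → ℂ}
    (hφ : ∀ x, ‖φ x‖ = 1) (hlim : Tendsto φ l (𝓝 c)) : ‖c‖ = 1 :=
  tendsto_nhds_unique hlim.norm (by simp only [hφ, tendsto_const_nhds])

-- `ℝ` is simply connected, so `f` lifts through the covering `exp : ℂ → ℂ ∖ {0}`, and a lift of
-- a unit-valued map is purely imaginary.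
theorem exists_isLift (hf : Continuous f) (hf1 : ∀ x, ‖f x‖ = 1) : ∃ F, IsLift f F := by
  have hf0 : ∀ x, f x ≠ 0 := fun x => norm_ne_zero_iff.1 (by simp [hf1 x])
  obtain ⟨L, -, hL⟩ := (isCoveringMapOn_exp.existsUnique_continuousMap_lifts ⟨f, hf⟩
    (exp_log (hf0 0)) fun x => hf0 x).exists
  have hLf : ∀ x, exp (L x) = f x := fun x => congrFun hL x
  have hre : ∀ x, (L x).re = 0 := fun x => by
    simpa [norm_exp, hf1 x] using congrArg norm (hLf x)
  refine ⟨fun x => (L x).im / (2 * Real.pi), by fun_prop, fun x => ?_⟩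
  rw [← hLf x]
  congr 1
  conv_lhs => rw [← re_add_im (L x), hre x, ofReal_zero, zero_add]
  push_cast
  field_simp

theorem IsLift.norm_eq_one (hF : IsLift f F) (x : ℝ) : ‖f x‖ = 1 :=
  (hF.isLiftOn Set.univ).norm_eq_one trivial

theorem IsLift.continuous (hF : IsLift f F) : Continuous f :=
  continuousOn_univ.1 (hF.isLiftOn Set.univ).continuousOn

theorem IsLift.exists_eq_add_intCast (hF : IsLift f F) (hG : IsLift f G) :
    ∃ n : ℤ, ∀ x, F x = G x + n := by
  simpa using isPreconnected_univ.exists_eq_add_intCast_of_isLiftOn (hF.isLiftOn _) (hG.isLiftOn _)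

theorem IsLift.comp_neg (hF : IsLift f F) : IsLift (fun x => f (-x)) (fun x => F (-x)) :=
  ⟨hF.1.comp continuous_neg, fun x => hF.2 (-x)⟩

/-- Where `f` stays within `1` of `c`, a lift of `f` is a constant plus the small angle from `c`
to `f`, which tends to `0`. -/
theorem IsLift.exists_tendsto_atTop (hF : IsLift f F) (hf : Tendsto f atTop (𝓝 c)) :
    ∃ a : ℝ, exp (2 * Real.pi * I * a) = c ∧ Tendsto F atTop (𝓝 a) := by
  have hc : ‖c‖ = 1 := norm_eq_one_of_tendsto hF.norm_eq_one hf
  obtain ⟨T, hT⟩ := eventually_atTop.1 (hf.eventually (Metric.ball_mem_nhds c one_pos))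
  have hlift := (isLiftOn_const hc (Set.Ici T)).add_argDivTwoPi_div hF.continuous.continuousOn
    (fun x _ => hF.norm_eq_one x) fun x hx => by
      simpa [dist_eq_norm] using hT x hx
  obtain ⟨n, hn⟩ := isPreconnected_Ici.exists_eq_add_intCast_of_isLiftOn (hF.isLiftOn _) hlift
  refine ⟨argDivTwoPi c + n, ?_, ?_⟩
  · exact (exp_two_pi_I_mul_eq_iff.2 ⟨n, rfl⟩).trans (exp_two_pi_I_mul_argDivTwoPi hc)
  · have hφ := tendsto_argDivTwoPi_div (norm_ne_zero_iff.1 (by simp [hc])) hf tendsto_const_nhds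
    refine Tendsto.congr' ?_ (by simpa using (hφ.const_add (argDivTwoPi c)).add_const (n : ℝ))
    filter_upwards [eventually_ge_atTop T] with x hx
    exact (hn x hx).symm

theorem IsLift.exists_tendsto_sub_neg (hF : IsLift f F) (hf : Tendsto f (cocompact ℝ) (𝓝 c)) :
    ∃ n : ℤ, Tendsto (fun x => F x - F (-x)) atTop (𝓝 n) := by
  rw [cocompact_eq_atBot_atTop, tendsto_sup] at hf
  obtain ⟨a, hac, ha⟩ := hF.exists_tendsto_atTop hf.2
  obtain ⟨b, hbc, hb⟩ := hF.comp_neg.exists_tendsto_atTop (hf.1.comp tendsto_neg_atTop_atBot)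
  obtain ⟨n, rfl⟩ := exp_two_pi_I_mul_eq_iff.1 (hac.trans hbc.symm)
  exact ⟨n, by simpa using ha.sub hb⟩

theorem IsLift.tendsto_sub_neg_sub_sub_neg (hF : IsLift f F) (hG : IsLift g G)
    (hfg : ∀ x, ‖f x - g x‖ < 1) (hf : Tendsto f (cocompact ℝ) (𝓝 c))
    (hg : Tendsto g (cocompact ℝ) (𝓝 c)) :
    Tendsto (fun x => (F x - F (-x)) - (G x - G (-x))) atTop (𝓝 0) := by
  have hc : c ≠ 0 := norm_ne_zero_iff.1 <| by
    rw [norm_eq_one_of_tendsto hF.norm_eq_one hf]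
    exact one_ne_zero
  have hlift := (hG.isLiftOn Set.univ).add_argDivTwoPi_div hF.continuous.continuousOn
    (fun x _ => hF.norm_eq_one x) fun x _ => hfg x
  obtain ⟨n, hn⟩ := isPreconnected_univ.exists_eq_add_intCast_of_isLiftOn (hF.isLiftOn _) hlift
  have hφ := tendsto_argDivTwoPi_div hc hf hg
  rw [cocompact_eq_atBot_atTop, tendsto_sup] at hφ
  refine Tendsto.congr (fun x => ?_) (by simpa using hφ.2.sub (hφ.1.comp tendsto_neg_atTop_atBot))
  simp only [hn x trivial, hn (-x) trivial]
  ring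

def HasWindingNumber (f : ℝ → ℂ) (n : ℤ) : Prop :=
  (∃ F, IsLift f F) ∧ ∀ F, IsLift f F → Tendsto (fun x => F x - F (-x)) atTop (𝓝 (n : ℝ))

theorem exists_hasWindingNumber (hf : Continuous f) (hf1 : ∀ x, ‖f x‖ = 1)
    (hlim : Tendsto f (cocompact ℝ) (𝓝 c)) : ∃ n, HasWindingNumber f n := by
  obtain ⟨F₀, hF₀⟩ := exists_isLift hf hf1
  obtain ⟨n, hn⟩ := hF₀.exists_tendsto_sub_neg hlim
  refine ⟨n, ⟨F₀, hF₀⟩, fun F hF => ?_⟩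
  obtain ⟨m, hm⟩ := hF.exists_eq_add_intCast hF₀
  simpa [hm] using hn

theorem hasWindingNumber_const (hc : ‖c‖ = 1) : HasWindingNumber (fun _ => c) 0 := by
  refine ⟨⟨_, continuous_const, fun x => (isLiftOn_const hc Set.univ).2 x trivial⟩, fun F hF => ?_⟩
  obtain ⟨n, hn⟩ := isPreconnected_univ.exists_eq_add_intCast_of_isLiftOn (hF.isLiftOn _)
    (isLiftOn_const hc _)
  simp [hn _ trivial]

theorem HasWindingNumber.eq_of_norm_sub_lt_one {m n : ℤ} (hm : HasWindingNumber f m)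
    (hn : HasWindingNumber g n) (hfg : ∀ x, ‖f x - g x‖ < 1)
    (hf : Tendsto f (cocompact ℝ) (𝓝 c)) (hg : Tendsto g (cocompact ℝ) (𝓝 c)) : m = n := by
  obtain ⟨⟨F, hF⟩, ⟨G, hG⟩⟩ := And.intro hm.1 hn.1
  have h := tendsto_nhds_unique ((hm.2 F hF).sub (hn.2 G hG))
    (hF.tendsto_sub_neg_sub_sub_neg hG hfg hf hg)
  exact_mod_cast sub_eq_zero.1 h

end Winding

section Cocompact

variable {X Y Z : Type*} [TopologicalSpace X] [TopologicalSpace Y]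

theorem tendsto_prodMk_cocompact (y : Y) :
    Tendsto (fun x : X => (x, y)) (cocompact X) (cocompact (X × Y)) := by
  rw [← coprod_cocompact]
  refine (tendsto_comap_iff.2 ?_).mono_right le_sup_left
  exact tendsto_id

variable [PseudoMetricSpace Z] {u : X × Y → Z} {z : Z}

theorem exists_isCompact_forall_dist_lt_of_tendsto_cocompact
    (hu : Tendsto u (cocompact (X × Y)) (𝓝 z)) {ε : ℝ} (hε : 0 < ε) :
    ∃ K : Set Y, IsCompact K ∧ ∀ y ∉ K, ∀ x, dist (u (x, y)) z < ε := by
  obtain ⟨K, hK, hKu⟩ := (hasBasis_cocompact.tendsto_iff Metric.nhds_basis_ball).1 hu ε hε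
  exact ⟨Prod.snd '' K, hK.image continuous_snd, fun y hy x => hKu (x, y) fun h => hy ⟨_, h, rfl⟩⟩

/-- Uniform closeness of the slices of `u` over a compact set of `x` comes from continuity, and
beyond that set both slices are close to `z`. -/
theorem Continuous.eventually_forall_dist_lt_of_tendsto_cocompact (hc : Continuous u)
    (hu : Tendsto u (cocompact (X × Y)) (𝓝 z)) (y₀ : Y) {ε : ℝ} (hε : 0 < ε) :
    ∀ᶠ y in 𝓝 y₀, ∀ x, dist (u (x, y)) (u (x, y₀)) < ε := by
  obtain ⟨K, hK, hKu⟩ := (hasBasis_cocompact.tendsto_iff Metric.nhds_basis_ball).1 hu (ε / 2)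
    (half_pos hε)
  have hnear := (hK.image continuous_fst).eventually_forall_of_forall_eventually
    (x₀ := y₀) (P := fun y x => dist (u (x, y)) (u (x, y₀)) < ε) fun x _ => by
      have : Continuous fun p : Y × X => dist (u (p.2, p.1)) (u (p.2, y₀)) := by fun_prop
      exact this.continuousAt.eventually_lt continuousAt_const (by simpa using hε)
  filter_upwards [hnear] with y hy x
  by_cases hx : x ∈ Prod.fst '' K
  · exact hy x hx
  · have h₁ := hKu (x, y) fun h => hx ⟨_, h, rfl⟩
    have h₂ := hKu (x, y₀) fun h => hx ⟨_, h, rfl⟩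
    rw [Metric.mem_ball] at h₁ h₂
    linarith [dist_triangle_right (u (x, y)) (u (x, y₀)) z]

end Cocompact

/-- Let `u : 𝔸 → S¹` be continuous with `u → λ` along the cocompact filter of `𝔸`.  Then
(i) for every finite adele `x_f`, the function `t ↦ u (t, x_f)` has limit `λ` at both
`+∞` and `-∞`, it admits a lift, and any lift computes an integer winding number
`w x_f`; (ii) the function `w : 𝔸_f → ℤ` is continuous (with `ℤ` discrete) and vanishes
outside a compact subset of `𝔸_f`. -/
theorem cocompact_convergent_winding_function (u : AdeleRingQ → ℂ) (lam : ℂ)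
    (hc : Continuous u) (hs : ∀ x : AdeleRingQ, ‖u x‖ = 1) (hlam : ‖lam‖ = 1)
    (hconv : Tendsto u (cocompact AdeleRingQ) (nhds lam)) :
    ∃ w : FiniteAdeles → ℤ,
      (∀ xf : FiniteAdeles, Tendsto (fun t : ℝ => u (t, xf)) atTop (nhds lam) ∧
        Tendsto (fun t : ℝ => u (t, xf)) atBot (nhds lam)) ∧
      (∀ xf : FiniteAdeles, ∃ F : ℝ → ℝ, IsLift (fun t : ℝ => u (t, xf)) F) ∧
      (∀ (xf : FiniteAdeles) (F : ℝ → ℝ), IsLift (fun t : ℝ => u (t, xf)) F →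
        Tendsto (fun x : ℝ => F x - F (-x)) atTop (nhds ((w xf : ℝ)))) ∧
      Continuous w ∧
      ∃ K : Set FiniteAdeles, IsCompact K ∧ ∀ xf ∉ K, w xf = 0 := by
  have hslice (xf : FiniteAdeles) : Tendsto (fun t : ℝ => u (t, xf)) (cocompact ℝ) (𝓝 lam) :=
    hconv.comp (tendsto_prodMk_cocompact xf)
  choose w hw using fun xf =>
    exists_hasWindingNumber (by fun_prop) (fun t => hs (t, xf)) (hslice xf)
  refine ⟨w, fun xf => ?_, fun xf => (hw xf).1, fun xf => (hw xf).2, ?_, ?_⟩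
  · have := hslice xf
    rw [cocompact_eq_atBot_atTop, tendsto_sup] at this
    exact this.symm
  · refine ((IsLocallyConstant.iff_eventually_eq w).2 fun xf => ?_).continuous
    filter_upwards [hc.eventually_forall_dist_lt_of_tendsto_cocompact hconv xf one_pos] with yf hyf
    exact (hw yf).eq_of_norm_sub_lt_one (hw xf) (by simpa [dist_eq_norm] using hyf) (hslice yf)
      (hslice xf)
  · obtain ⟨K, hK, hKu⟩ := exists_isCompact_forall_dist_lt_of_tendsto_cocompact hconv one_pos
    exact ⟨K, hK, fun xf hxf => (hw xf).eq_of_norm_sub_lt_one (hasWindingNumber_const hlam)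
      (by simpa [dist_eq_norm] using hKu xf hxf) (hslice xf) tendsto_const_nhds⟩
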